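/- arXiv:1012.5428 — 3 statements merged into one kernel-verified Lean document; each statement's English description precedes it below -/
import Mathlib

section
/- There exists a constant a₆>0, depending only on s and f, such that for every β∈(0,1], every integer m≥1, and every critical point u of the restriction of I_β to the finite-dimensional space E^{+m}⊕E^{−m}⊕N^m (i.e., the derivative of this restriction vanishes at u), one has ∫_Q |u|^{s+1} dx dt ≤ a₆(I_β(u)²+1). -/
open MeasureTheory

noncomputable section

/-- The space-time domain `Q = (0,π) × (0,2π)`. -/
def Qset : Set (ℝ × ℝ) := Set.Ioo 0 Real.pi ×ˢ Set.Ioo 0 (2 * Real.pi)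

/-- Basis function `sin(jx)·cos(kt)`. -/
def phiA (j k : ℕ) : ℝ × ℝ → ℝ := fun p => Real.sin (j * p.1) * Real.cos (k * p.2)

/-- Basis function `sin(jx)·sin(kt)`. -/
def phiB (j k : ℕ) : ℝ × ℝ → ℝ := fun p => Real.sin (j * p.1) * Real.sin (k * p.2)

/-- The (normalized) Fourier coefficient of `u` against `sin(jx)cos(kt)`. -/
def coefA (j k : ℕ) (u : ℝ × ℝ → ℝ) : ℝ :=
  ((if k = 0 then 1 else 2) / Real.pi ^ 2) * ∫ p in Qset, u p * phiA j k p

/-- The (normalized) Fourier coefficient of `u` against `sin(jx)sin(kt)`. -/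
def coefB (j k : ℕ) (u : ℝ × ℝ → ℝ) : ℝ :=
  (2 / Real.pi ^ 2) * ∫ p in Qset, u p * phiB j k p

/-- `‖w⁺‖_E²`, the square of the `E`-norm of the `E⁺` (i.e. `k > j`) component of `u`. -/
def normPlusSq (u : ℝ × ℝ → ℝ) : ℝ :=
  Real.pi ^ 2 * ∑' jk : ℕ × ℕ,
    if jk.1 < jk.2 then
      |((jk.2 : ℝ) ^ 2 - (jk.1 : ℝ) ^ 2)| * ((coefA jk.1 jk.2 u) ^ 2 + (coefB jk.1 jk.2 u) ^ 2)
    else 0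

/-- `‖w⁻‖_E²`, the square of the `E`-norm of the `E⁻` (i.e. `k < j`) component of `u`. -/
def normMinusSq (u : ℝ × ℝ → ℝ) : ℝ :=
  Real.pi ^ 2 * ∑' jk : ℕ × ℕ,
    if jk.2 < jk.1 then
      |((jk.2 : ℝ) ^ 2 - (jk.1 : ℝ) ^ 2)| * ((coefA jk.1 jk.2 u) ^ 2 + (coefB jk.1 jk.2 u) ^ 2)
    else 0

/-- `‖w‖_E²`, the square of the full `E`-norm (over all `k ≠ j`). -/
def normESq (u : ℝ × ℝ → ℝ) : ℝ := normPlusSq u + normMinusSq u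

/-- `‖v_t‖²_{L²(Q)}`, where `v` is the kernel (`k = j`) component of `u`. -/
def vtNormSq (u : ℝ × ℝ → ℝ) : ℝ :=
  (Real.pi ^ 2 / 2) * ∑' j : ℕ, (j : ℝ) ^ 2 * ((coefA j j u) ^ 2 + (coefB j j u) ^ 2)

/-- `‖u‖_{β,E}² = ‖w⁺‖_E² + ‖w⁻‖_E² + β‖v_t‖²_{L²}`. -/
def normBetaSq (β : ℝ) (u : ℝ × ℝ → ℝ) : ℝ := normPlusSq u + normMinusSq u + β * vtNormSq u

/-- `‖u‖_{β,E}`. -/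
def normBeta (β : ℝ) (u : ℝ × ℝ → ℝ) : ℝ := Real.sqrt (normBetaSq β u)

/-- `∫_Q |u|^r dx dt`. -/
def intPow (r : ℝ) (u : ℝ × ℝ → ℝ) : ℝ := ∫ p in Qset, |u p| ^ r

/-- `∫_Q f·u dx dt`. -/
def intFU (f u : ℝ × ℝ → ℝ) : ℝ := ∫ p in Qset, f p * u p

/-- The functional `I_β`. -/
def Ibeta (s : ℝ) (f : ℝ × ℝ → ℝ) (β : ℝ) (u : ℝ × ℝ → ℝ) : ℝ :=
  (1 / 2) * (normPlusSq u - normMinusSq u - β * vtNormSq u)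
    - (1 / (s + 1)) * intPow (s + 1) u - intFU f u

/-- `𝓘_β(u) = 2a₆(I_β(u)² + 1)`. -/
def calI (s : ℝ) (f : ℝ × ℝ → ℝ) (a6 β : ℝ) (u : ℝ × ℝ → ℝ) : ℝ :=
  2 * a6 * ((Ibeta s f β u) ^ 2 + 1)

/-- The cutoff `ψ(u) = χ(𝓘_β(u)⁻¹·(1/(s+1))∫_Q|u|^{s+1})`. -/
def psiCut (s : ℝ) (f : ℝ × ℝ → ℝ) (a6 : ℝ) (χ : ℝ → ℝ) (β : ℝ) (u : ℝ × ℝ → ℝ) : ℝ :=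
  χ ((calI s f a6 β u)⁻¹ * ((1 / (s + 1)) * intPow (s + 1) u))

/-- The truncated functional `J_β`. -/
def Jbeta (s : ℝ) (f : ℝ × ℝ → ℝ) (a6 : ℝ) (χ : ℝ → ℝ) (β : ℝ) (u : ℝ × ℝ → ℝ) : ℝ :=
  (1 / 2) * (normPlusSq u - normMinusSq u - β * vtNormSq u)
    - (1 / (s + 1)) * intPow (s + 1) u - psiCut s f a6 χ β u * intFU f u

/-- Indices `(j, k, A/B)` of the eigenfunctions with positive eigenvalue: `1 ≤ j < k`. -/
def IdxSet : Set (ℕ × ℕ × Bool) := {i | 1 ≤ i.1 ∧ i.1 < i.2.1}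

/-- The eigenfunction corresponding to an index. -/
def idxFun (i : ℕ × ℕ × Bool) : ℝ × ℝ → ℝ := if i.2.2 then phiA i.1 i.2.1 else phiB i.1 i.2.1

/-- The eigenvalue `k² - j²` of an index. -/
def eigenval (i : ℕ × ℕ × Bool) : ℝ := (i.2.1 : ℝ) ^ 2 - (i.1 : ℝ) ^ 2

/-- `e` (0-indexed: `e_{l+1} = idxFun (e l)`) enumerates the positive-eigenvalue
eigenfunctions in nondecreasing order of `k² - j²`. -/
def IsEnum (e : ℕ → ℕ × ℕ × Bool) : Prop :=
  Function.Injective e ∧ Set.range e = IdxSet ∧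
    ∀ l l' : ℕ, l ≤ l' → eigenval (e l) ≤ eigenval (e l')

/-- `E^{+n} = span{e₁, …, e_n}`. -/
def Eplus (e : ℕ → ℕ × ℕ × Bool) (n : ℕ) : Submodule ℝ (ℝ × ℝ → ℝ) :=
  Submodule.span ℝ (idxFun '' (e '' {l | l < n}))

/-- `E^{-m} = span{sin(jx)cos(kt), sin(jx)sin(kt) : j + k ≤ m, 0 ≤ k < j}`. -/
def Eminus (m : ℕ) : Submodule ℝ (ℝ × ℝ → ℝ) :=
  Submodule.span ℝ {g | ∃ j k : ℕ, j + k ≤ m ∧ k < j ∧ (g = phiA j k ∨ g = phiB j k)}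

/-- `N^m = span{sin(jx)cos(jt), sin(jx)sin(jt) : 1 ≤ j ≤ m}`. -/
def Nspace (m : ℕ) : Submodule ℝ (ℝ × ℝ → ℝ) :=
  Submodule.span ℝ {g | ∃ j : ℕ, 1 ≤ j ∧ j ≤ m ∧ (g = phiA j j ∨ g = phiB j j)}

/-- `E^{+n} ⊕ E^{-m} ⊕ N^m`. -/
def Wnm (e : ℕ → ℕ × ℕ × Bool) (n m : ℕ) : Submodule ℝ (ℝ × ℝ → ℝ) :=
  Eplus e n ⊔ Eminus m ⊔ Nspace m

/-- `f` is `C²`, `2π`-periodic in `t`, and vanishes at `x = 0` and `x = π`. -/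
def fAdmissible (f : ℝ × ℝ → ℝ) : Prop :=
  ContDiff ℝ 2 f ∧ (∀ x t : ℝ, f (x, t + 2 * Real.pi) = f (x, t)) ∧
    ∀ t : ℝ, f (0, t) = 0 ∧ f (Real.pi, t) = 0

/-- The cutoff function `χ`: smooth, `χ = 1` on `(-∞,1]`, `χ = 0` on `[2,∞)`,
and `-2 < χ' < 0` on `(1,2)`. -/
def chiAdmissible (χ : ℝ → ℝ) : Prop :=
  ContDiff ℝ (⊤ : ℕ∞) χ ∧ (∀ t : ℝ, t ≤ 1 → χ t = 1) ∧ (∀ t : ℝ, 2 ≤ t → χ t = 0) ∧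
    ∀ t : ℝ, 1 < t → t < 2 → -2 < deriv χ t ∧ deriv χ t < 0


/-!
Differentiating `I_β` at a critical point `u` along `u` itself gives the Nehari identity
`‖w⁺‖_E² - ‖w⁻‖_E² - β‖v_t‖² = ∫_Q |u|^{s+1} + ∫_Q f u`. Eliminating the quadratic part from
`I_β(u)` yields `∫_Q |u|^{s+1} = (s+1)/(s-1) · (2 I_β(u) + ∫_Q f u)`, and the forcing term is
absorbed by a Young-type bound `|∫_Q f u| ≤ K + (s-1)/(2(s+1)) ∫_Q |u|^{s+1}` with `K`
depending only on `s` and `sup |f|`.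
-/

def quadForm (β : ℝ) (u : ℝ × ℝ → ℝ) : ℝ := normPlusSq u - normMinusSq u - β * vtNormSq u

lemma Ibeta_eq (s : ℝ) (f : ℝ × ℝ → ℝ) (β : ℝ) (u : ℝ × ℝ → ℝ) :
    Ibeta s f β u = quadForm β u / 2 - intPow (s + 1) u / (s + 1) - intFU f u := by
  simp only [Ibeta, quadForm]; ring

section Homogeneity

variable (c : ℝ) (u : ℝ × ℝ → ℝ)

lemma coefA_smul (j k : ℕ) : coefA j k (c • u) = c * coefA j k u := by
  simp only [coefA, Pi.smul_apply, smul_eq_mul, mul_assoc, integral_const_mul]; ring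

lemma coefB_smul (j k : ℕ) : coefB j k (c • u) = c * coefB j k u := by
  simp only [coefB, Pi.smul_apply, smul_eq_mul, mul_assoc, integral_const_mul]; ring

lemma normPlusSq_smul : normPlusSq (c • u) = c ^ 2 * normPlusSq u := by
  simp only [normPlusSq, coefA_smul, coefB_smul, mul_pow, ← mul_add, mul_left_comm _ (c ^ 2),
    ← mul_ite_zero, tsum_mul_left]

lemma normMinusSq_smul : normMinusSq (c • u) = c ^ 2 * normMinusSq u := by
  simp only [normMinusSq, coefA_smul, coefB_smul, mul_pow, ← mul_add, mul_left_comm _ (c ^ 2),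
    ← mul_ite_zero, tsum_mul_left]

lemma vtNormSq_smul : vtNormSq (c • u) = c ^ 2 * vtNormSq u := by
  simp only [vtNormSq, coefA_smul, coefB_smul, mul_pow, ← mul_add, mul_left_comm _ (c ^ 2),
    tsum_mul_left]

lemma quadForm_smul (β : ℝ) : quadForm β (c • u) = c ^ 2 * quadForm β u := by
  simp only [quadForm, normPlusSq_smul, normMinusSq_smul, vtNormSq_smul]; ring

lemma intPow_smul (r : ℝ) : intPow r (c • u) = |c| ^ r * intPow r u := by
  simp only [intPow, Pi.smul_apply, smul_eq_mul, abs_mul,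
    Real.mul_rpow (abs_nonneg c) (abs_nonneg _), integral_const_mul]

lemma intFU_smul (f : ℝ × ℝ → ℝ) : intFU f (c • u) = c * intFU f u := by
  simp only [intFU, Pi.smul_apply, smul_eq_mul, mul_left_comm (f _), integral_const_mul]

end Homogeneity

lemma Ibeta_smul_of_nonneg (s : ℝ) (f : ℝ × ℝ → ℝ) (β : ℝ) {c : ℝ} (hc : 0 ≤ c)
    (u : ℝ × ℝ → ℝ) :
    Ibeta s f β (c • u) =
      c ^ 2 * (quadForm β u / 2) - c ^ (s + 1) * (intPow (s + 1) u / (s + 1)) - c * intFU f u := by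
  rw [Ibeta_eq, quadForm_smul, intPow_smul, intFU_smul, abs_of_nonneg hc]; ring

lemma hasDerivAt_Ibeta_add_smul_self {s : ℝ} (hs : s + 1 ≠ 0) (f : ℝ × ℝ → ℝ) (β : ℝ)
    (u : ℝ × ℝ → ℝ) :
    HasDerivAt (fun τ : ℝ => Ibeta s f β (u + τ • u))
      (quadForm β u - intPow (s + 1) u - intFU f u) 0 := by
  set A := quadForm β u / 2
  set P := intPow (s + 1) u / (s + 1)
  set C := intFU f u
  have hray : (fun τ : ℝ => (1 + τ) ^ 2 * A - (1 + τ) ^ (s + 1) * P - (1 + τ) * C)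
      =ᶠ[nhds 0] fun τ : ℝ => Ibeta s f β (u + τ • u) := by
    filter_upwards [Ioi_mem_nhds (show (-1 : ℝ) < 0 by norm_num)] with τ hτ
    rw [show u + τ • u = (1 + τ) • u by rw [add_smul, one_smul],
      Ibeta_smul_of_nonneg s f β (by linarith [Set.mem_Ioi.mp hτ])]
  have hline : HasDerivAt (fun τ : ℝ => 1 + τ) 1 0 := (hasDerivAt_id 0).const_add 1
  have hder := (((hline.pow 2).mul_const A).sub
    ((hline.rpow_const (p := s + 1) (Or.inl (by norm_num))).mul_const P)).sub (hline.mul_const C)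
  refine (hder.congr_of_eventuallyEq hray.symm).congr_deriv ?_
  simp only [A, P, C]
  norm_num
  field_simp

lemma quadForm_eq_of_deriv_ray_eq_zero {s : ℝ} (hs : s + 1 ≠ 0) {f : ℝ × ℝ → ℝ} {β : ℝ}
    {u : ℝ × ℝ → ℝ} (hcrit : deriv (fun τ : ℝ => Ibeta s f β (u + τ • u)) 0 = 0) :
    quadForm β u = intPow (s + 1) u + intFU f u := by
  rw [(hasDerivAt_Ibeta_add_smul_self hs f β u).deriv] at hcrit
  linarith

lemma intPow_eq_of_deriv_ray_eq_zero {s : ℝ} (hs : 1 < s) {f : ℝ × ℝ → ℝ} {β : ℝ}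
    {u : ℝ × ℝ → ℝ} (hcrit : deriv (fun τ : ℝ => Ibeta s f β (u + τ • u)) 0 = 0) :
    intPow (s + 1) u = (s + 1) / (s - 1) * (2 * Ibeta s f β u + intFU f u) := by
  have hQ := quadForm_eq_of_deriv_ray_eq_zero (by linarith) hcrit
  rw [Ibeta_eq, hQ]
  field_simp [show s - 1 ≠ 0 by linarith, show s + 1 ≠ 0 by linarith]
  ring

lemma Wnm_le_continuousSubmodule (e : ℕ → ℕ × ℕ × Bool) (n m : ℕ) :
    Wnm e n m ≤ continuousSubmodule (ℝ × ℝ) ℝ ℝ := by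
  have hA : ∀ j k, Continuous (phiA j k) := fun j k => by unfold phiA; fun_prop
  have hB : ∀ j k, Continuous (phiB j k) := fun j k => by unfold phiB; fun_prop
  refine sup_le (sup_le (Submodule.span_le.mpr ?_) (Submodule.span_le.mpr ?_))
    (Submodule.span_le.mpr ?_)
  · rintro _ ⟨i, -, rfl⟩
    unfold idxFun
    split
    exacts [hA _ _, hB _ _]
  · rintro _ ⟨j, k, -, -, rfl | rfl⟩
    exacts [hA j k, hB j k]
  · rintro _ ⟨j, -, -, rfl | rfl⟩
    exacts [hA j j, hB j j]

lemma le_add_rpow_div_rpow {s y R : ℝ} (hs : 0 ≤ s) (hy : 0 ≤ y) (hR : 0 < R) :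
    y ≤ R + y ^ (s + 1) / R ^ s := by
  rcases le_or_gt y R with hyR | hRy
  · have : 0 ≤ y ^ (s + 1) / R ^ s := by positivity
    linarith
  · have hRs : R ^ s ≤ y ^ s := Real.rpow_le_rpow hR.le hRy.le hs
    have : y * R ^ s ≤ y ^ (s + 1) := by
      rw [Real.rpow_add (hR.trans hRy), Real.rpow_one, mul_comm]
      exact mul_le_mul_of_nonneg_right hRs hy
    have : y ≤ y ^ (s + 1) / R ^ s := by rwa [le_div_iff₀ (by positivity)]
    linarith

-- Young-type splitting `|g u| ≤ M R + (M / R^s) |u|^{s+1}`, integrated.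
lemma abs_integral_mul_le {α : Type*} [MeasurableSpace α] {μ : Measure α} [IsFiniteMeasure μ]
    {g u : α → ℝ} {M R s : ℝ} (hs : 0 ≤ s) (hR : 0 < R) (hM : 0 ≤ M)
    (hg : ∀ᵐ x ∂μ, |g x| ≤ M) (hgu : Integrable (fun x => g x * u x) μ)
    (hu : Integrable (fun x => |u x| ^ (s + 1)) μ) :
    |∫ x, g x * u x ∂μ| ≤ M * R * μ.real Set.univ + M / R ^ s * ∫ x, |u x| ^ (s + 1) ∂μ := by
  have hpt : ∀ᵐ x ∂μ, |g x * u x| ≤ M * R + M / R ^ s * |u x| ^ (s + 1) := by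
    filter_upwards [hg] with x hx
    calc |g x * u x| = |g x| * |u x| := abs_mul _ _
      _ ≤ M * (R + |u x| ^ (s + 1) / R ^ s) :=
        mul_le_mul hx (le_add_rpow_div_rpow hs (abs_nonneg _) hR) (abs_nonneg _) hM
      _ = M * R + M / R ^ s * |u x| ^ (s + 1) := by ring
  calc |∫ x, g x * u x ∂μ| ≤ ∫ x, |g x * u x| ∂μ := abs_integral_le_integral_abs
    _ ≤ ∫ x, (M * R + M / R ^ s * |u x| ^ (s + 1)) ∂μ :=
        integral_mono_ae hgu.abs ((integrable_const _).add (hu.const_mul _)) hpt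
    _ = M * R * μ.real Set.univ + M / R ^ s * ∫ x, |u x| ^ (s + 1) ∂μ := by
        rw [integral_add (integrable_const _) (hu.const_mul _), integral_const,
          integral_const_mul, smul_eq_mul, mul_comm (μ.real _)]

lemma measurableSet_Qset : MeasurableSet Qset := measurableSet_Ioo.prod measurableSet_Ioo

def Qbar : Set (ℝ × ℝ) := Set.Icc 0 Real.pi ×ˢ Set.Icc 0 (2 * Real.pi)

lemma Qset_subset_Qbar : Qset ⊆ Qbar :=
  Set.prod_mono Set.Ioo_subset_Icc_self Set.Ioo_subset_Icc_self

lemma isCompact_Qbar : IsCompact Qbar := isCompact_Icc.prod isCompact_Icc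

instance isFiniteMeasure_restrict_Qset : IsFiniteMeasure (volume.restrict Qset) :=
  isFiniteMeasure_restrict.mpr
    (measure_mono Qset_subset_Qbar |>.trans_lt isCompact_Qbar.measure_lt_top).ne

lemma exists_abs_intFU_le {f : ℝ × ℝ → ℝ} (hf : Continuous f) {s : ℝ} (hs : 0 < s)
    {ε : ℝ} (hε : 0 < ε) :
    ∃ K, 0 ≤ K ∧ ∀ u : ℝ × ℝ → ℝ, Continuous u → |intFU f u| ≤ K + ε * intPow (s + 1) u := by
  obtain ⟨M₀, hM₀⟩ := isCompact_Qbar.exists_bound_of_continuousOn hf.continuousOn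
  set M := max M₀ 1
  have hM : 0 < M := lt_max_of_lt_right one_pos
  set R := (M / ε) ^ (1 / s)
  have hR : 0 < R := by positivity
  have hRs : M / R ^ s = ε := by
    rw [← Real.rpow_mul (by positivity), one_div_mul_cancel hs.ne', Real.rpow_one]
    field_simp
  refine ⟨M * R * (volume.restrict Qset).real Set.univ, by positivity, fun u hu => ?_⟩
  have hf_le : ∀ᵐ p ∂volume.restrict Qset, |f p| ≤ M :=
    ae_restrict_of_forall_mem measurableSet_Qset fun p hp =>
      (hM₀ p (Qset_subset_Qbar hp)).trans (le_max_left _ _)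
  have hint : ∀ {g : ℝ × ℝ → ℝ}, Continuous g → Integrable g (volume.restrict Qset) :=
    fun hg => (hg.continuousOn.integrableOn_compact isCompact_Qbar).mono_set Qset_subset_Qbar
  have := abs_integral_mul_le hs.le hR hM.le hf_le (hint (hf.mul hu))
    (hint (hu.abs.rpow_const fun _ => Or.inr (by linarith)))
  rwa [hRs] at this

lemma le_mul_sq_add_one_of_eq_of_abs_le {κ K P I C : ℝ} (hκ : 0 < κ) (hK : 0 ≤ K)
    (hP : P = κ * (2 * I + C)) (hC : |C| ≤ K + 1 / (2 * κ) * P) :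
    P ≤ 2 * κ * (1 + K) * (I ^ 2 + 1) := by
  have hPle : P ≤ 2 * κ * |I| + κ * |C| := by
    rw [hP]; nlinarith [le_abs_self I, le_abs_self C]
  have hκC : κ * |C| ≤ κ * K + P / 2 := by
    calc κ * |C| ≤ κ * (K + 1 / (2 * κ) * P) := mul_le_mul_of_nonneg_left hC hκ.le
      _ = κ * K + P / 2 := by field_simp
  have hI : 2 * |I| ≤ I ^ 2 + 1 := by nlinarith [sq_nonneg (|I| - 1), sq_abs I]
  nlinarith [mul_nonneg hK (sq_nonneg I)]

theorem statement4_general (s : ℝ) (hs : 1 < s) (f : ℝ × ℝ → ℝ) (hf : fAdmissible f)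
    (e : ℕ → ℕ × ℕ × Bool) :
    ∃ a6 : ℝ, 0 < a6 ∧ ∀ β ∈ Set.Ioc (0 : ℝ) 1, ∀ m : ℕ, 1 ≤ m →
      ∀ u ∈ Wnm e m m,
        (∀ φ ∈ Wnm e m m, deriv (fun τ : ℝ => Ibeta s f β (u + τ • φ)) 0 = 0) →
        intPow (s + 1) u ≤ a6 * ((Ibeta s f β u) ^ 2 + 1) := by
  set κ := (s + 1) / (s - 1)
  have hκ : 0 < κ := div_pos (by linarith) (by linarith)
  obtain ⟨K, hK, hforce⟩ :=
    exists_abs_intFU_le hf.1.continuous (s := s) (by linarith) (ε := 1 / (2 * κ)) (by positivity)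
  refine ⟨2 * κ * (1 + K), by positivity, fun β _ m _ u hu hcrit => ?_⟩
  exact le_mul_sq_add_one_of_eq_of_abs_le hκ hK (intPow_eq_of_deriv_ray_eq_zero hs (hcrit u hu))
    (hforce u (Wnm_le_continuousSubmodule e m m hu))

/-- a priori `L^{s+1}` bound at critical points of `I_β` restricted to
`E^{+m} ⊕ E^{-m} ⊕ N^m`, uniform in `β ∈ (0,1]` and `m`. -/
theorem statement4 (s : ℝ) (hs : 1 < s) (f : ℝ × ℝ → ℝ) (hf : fAdmissible f)
    (e : ℕ → ℕ × ℕ × Bool) (he : IsEnum e) :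
    ∃ a6 : ℝ, 0 < a6 ∧ ∀ β ∈ Set.Ioc (0 : ℝ) 1, ∀ m : ℕ, 1 ≤ m →
      ∀ u ∈ Wnm e m m,
        (∀ φ ∈ Wnm e m m, deriv (fun τ : ℝ => Ibeta s f β (u + τ • φ)) 0 = 0) →
        intPow (s + 1) u ≤ a6 * ((Ibeta s f β u) ^ 2 + 1) :=
  statement4_general s hs f hf e
end
end

section
/- There exist constants α₀>0 and M₀>0, depending only on f, s, a₆ and χ (in particular independent of β and m), such that for every β∈(0,1], every integer m≥1, every M≥M₀, and every u∈E^{+m}⊕E^{−m}⊕N^m satisfying J_β(u)≥M and ∫_Q|u|^{s+1} dx dt ≤ 2(s+1)·𝓘_β(u), one has I_β(u) ≥ α₀·M. -/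
open MeasureTheory

noncomputable section

/-!
On the support of `ψ` we have `∫_Q |u|^{s+1} ≲ I_β(u)² + 1`, so by Hölder
`|∫_Q f u| ≲ (|I_β(u)| + 1)^{2/(s+1)}`, a sublinear power of `|I_β(u)|` because `s > 1`.
Since `0 ≤ ψ ≤ 1`, `J_β(u) ≤ I_β(u) + |∫_Q f u|`, and absorbing the sublinear term
(Young) gives `M ≤ J_β(u) ≤ I_β(u) + (|I_β(u)| + 1)/4 + B`, which forces `I_β(u) ≥ 2M/5`
once `M ≥ 4(|B| + 1)`.
-/

theorem continuous_phiA (j k : ℕ) : Continuous (phiA j k) := by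
  unfold phiA; fun_prop

theorem continuous_phiB (j k : ℕ) : Continuous (phiB j k) := by
  unfold phiB; fun_prop

theorem continuous_idxFun (i : ℕ × ℕ × Bool) : Continuous (idxFun i) := by
  unfold idxFun
  split
  exacts [continuous_phiA _ _, continuous_phiB _ _]

theorem continuous_of_mem_Wnm {e : ℕ → ℕ × ℕ × Bool} {n m : ℕ} {u : ℝ × ℝ → ℝ}
    (hu : u ∈ Wnm e n m) : Continuous u := by
  suffices Wnm e n m ≤ continuousSubmodule (ℝ × ℝ) ℝ ℝ from this hu
  refine sup_le (sup_le ?_ ?_) ?_ <;> refine Submodule.span_le.2 ?_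
  · rintro _ ⟨i, -, rfl⟩
    exact continuous_idxFun i
  · rintro _ ⟨j, k, -, -, rfl | rfl⟩
    exacts [continuous_phiA j k, continuous_phiB j k]
  · rintro _ ⟨j, -, -, rfl | rfl⟩
    exacts [continuous_phiA j j, continuous_phiB j j]

theorem chiAdmissible.mem_Icc {χ : ℝ → ℝ} (hχ : chiAdmissible χ) (t : ℝ) :
    χ t ∈ Set.Icc 0 1 := by
  obtain ⟨hsmooth, hone, hzero, hderiv⟩ := hχ
  have hanti : StrictAntiOn χ (Set.Icc 1 2) :=
    strictAntiOn_of_deriv_neg (convex_Icc 1 2) hsmooth.continuous.continuousOn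
      (by rw [interior_Icc]; exact fun x hx => (hderiv x hx.1 hx.2).2)
  rcases le_or_gt t 1 with h1 | h1
  · simp [hone t h1]
  rcases le_or_gt 2 t with h2 | h2
  · simp [hzero t h2]
  have ht : t ∈ Set.Icc (1 : ℝ) 2 := ⟨h1.le, h2.le⟩
  have hlt1 := hanti (Set.left_mem_Icc.2 one_le_two) ht h1
  have hlt2 := hanti ht (Set.right_mem_Icc.2 one_le_two) h2
  rw [hone 1 le_rfl] at hlt1
  rw [hzero 2 le_rfl] at hlt2
  exact ⟨hlt2.le, hlt1.le⟩

theorem Jbeta_le_Ibeta_add_abs_intFU {χ : ℝ → ℝ} (hχ : chiAdmissible χ) (s : ℝ)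
    (f : ℝ × ℝ → ℝ) (a6 β : ℝ) (u : ℝ × ℝ → ℝ) :
    Jbeta s f a6 χ β u ≤ Ibeta s f β u + |intFU f u| := by
  obtain ⟨hψ0, hψ1⟩ : psiCut s f a6 χ β u ∈ Set.Icc 0 1 := hχ.mem_Icc _
  have hJ : Jbeta s f a6 χ β u = Ibeta s f β u + (1 - psiCut s f a6 χ β u) * intFU f u := by
    unfold Jbeta Ibeta
    ring
  have hfactor : (1 - psiCut s f a6 χ β u) * intFU f u ≤ |intFU f u| :=
    calc (1 - psiCut s f a6 χ β u) * intFU f u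
        ≤ |1 - psiCut s f a6 χ β u| * |intFU f u| := by rw [← abs_mul]; exact le_abs_self _
      _ ≤ |intFU f u| :=
        mul_le_of_le_one_left (abs_nonneg _) (abs_le.2 ⟨by linarith, by linarith⟩)
  linarith

theorem intPow_nonneg (r : ℝ) (g : ℝ × ℝ → ℝ) : 0 ≤ intPow r g :=
  setIntegral_nonneg (measurableSet_Ioo.prod measurableSet_Ioo)
    fun _ _ => Real.rpow_nonneg (abs_nonneg _) _

theorem memLp_restrict_of_subset_isCompact {X : Type*} [TopologicalSpace X] [MeasurableSpace X]
    [OpensMeasurableSpace X] {μ : Measure X} [IsFiniteMeasureOnCompacts μ] {K S : Set X}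
    (hK : IsCompact K) (hSK : S ⊆ K) (hS : MeasurableSet S) {g : X → ℝ} (hg : Continuous g)
    (p : ENNReal) : MemLp g p (μ.restrict S) := by
  have : IsFiniteMeasure (μ.restrict S) :=
    isFiniteMeasure_restrict.2 ((measure_mono hSK).trans_lt hK.measure_lt_top).ne
  obtain ⟨C, hC⟩ := hK.exists_bound_of_continuousOn hg.continuousOn
  exact MemLp.of_bound hg.aestronglyMeasurable C
    (ae_restrict_of_forall_mem hS fun x hx => hC x (hSK hx))

theorem Continuous.memLp_restrict_Qset {g : ℝ × ℝ → ℝ} (hg : Continuous g) (p : ENNReal) :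
    MemLp g p (volume.restrict Qset) :=
  memLp_restrict_of_subset_isCompact (isCompact_Icc.prod isCompact_Icc)
    (Set.prod_mono Set.Ioo_subset_Icc_self Set.Ioo_subset_Icc_self)
    (measurableSet_Ioo.prod measurableSet_Ioo) hg p

theorem abs_intFU_le_holder {f u : ℝ × ℝ → ℝ} (hf : Continuous f) (hu : Continuous u)
    {p q : ℝ} (hpq : p.HolderConjugate q) :
    |intFU f u| ≤ intPow q f ^ (1 / q) * intPow p u ^ (1 / p) :=
  calc |intFU f u| ≤ ∫ x in Qset, ‖f x‖ * ‖u x‖ := by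
        simp only [← norm_mul]
        exact norm_integral_le_integral_norm (fun x => f x * u x)
    _ ≤ _ := integral_mul_norm_le_Lp_mul_Lq hpq.symm (hf.memLp_restrict_Qset _)
        (hu.memLp_restrict_Qset _)

theorem rpow_le_of_le_mul_sq_add_one {P c x r : ℝ} (hP : 0 ≤ P) (hc : 0 ≤ c) (hr : 0 ≤ r)
    (h : P ≤ c * (x ^ 2 + 1)) : P ^ r ≤ c ^ r * (|x| + 1) ^ (2 * r) :=
  calc P ^ r ≤ (c * (x ^ 2 + 1)) ^ r := Real.rpow_le_rpow hP h hr
    _ = c ^ r * (x ^ 2 + 1) ^ r := Real.mul_rpow hc (by positivity)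
    _ ≤ c ^ r * ((|x| + 1) ^ 2) ^ r := by
        gcongr
        nlinarith [sq_abs x, abs_nonneg x]
    _ = c ^ r * (|x| + 1) ^ (2 * r) := by
        rw [← Real.rpow_natCast, ← Real.rpow_mul (by positivity), Nat.cast_ofNat]

theorem abs_intFU_le_of_intPow_le_calI {s : ℝ} (hs : 0 < s) {f u : ℝ × ℝ → ℝ}
    (hf : Continuous f) (hu : Continuous u) {a6 β : ℝ} (ha6 : 0 ≤ a6)
    (hsupp : intPow (s + 1) u ≤ 2 * (s + 1) * calI s f a6 β u) :
    |intFU f u| ≤ intPow (s + 1).conjExponent f ^ (1 / (s + 1).conjExponent)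
      * (4 * a6 * (s + 1)) ^ (1 / (s + 1)) * (|Ibeta s f β u| + 1) ^ (2 / (s + 1)) := by
  have hpow := rpow_le_of_le_mul_sq_add_one (intPow_nonneg _ u) (by positivity) (by positivity)
    (c := 4 * a6 * (s + 1)) (x := Ibeta s f β u) (r := 1 / (s + 1))
    (by unfold calI at hsupp; linarith)
  rw [mul_one_div] at hpow
  rw [mul_assoc]
  calc |intFU f u| ≤ _ :=
        abs_intFU_le_holder hf hu (.conjExponent (by linarith : (1 : ℝ) < s + 1))
    _ ≤ _ := by
        have := intPow_nonneg (s + 1).conjExponent f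
        gcongr

/-- Young's inequality with the conjugate exponents `1/θ` and `1/(1-θ)`. -/
theorem rpow_le_mul_add_rpow {x θ ε : ℝ} (hx : 0 ≤ x) (hθ0 : 0 < θ) (hθ1 : θ < 1) (hε : 0 < ε) :
    x ^ θ ≤ ε * x + ε ^ (-(θ / (1 - θ))) := by
  have h1θ : 0 < 1 - θ := by linarith
  set R := ε ^ (-(1 / (1 - θ)))
  have hR0 : 0 < R := Real.rpow_pos_of_pos hε _
  rcases le_or_gt x R with hxR | hxR
  · have hRθ : R ^ θ = ε ^ (-(θ / (1 - θ))) := by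
      rw [← Real.rpow_mul hε.le]
      congr 1
      field_simp
    have := Real.rpow_le_rpow hx hxR hθ0.le
    nlinarith [mul_nonneg hε.le hx]
  · have hx0 : 0 < x := hR0.trans hxR
    have hRθ : R ^ (θ - 1) = ε := by
      rw [← Real.rpow_mul hε.le, show -(1 / (1 - θ)) * (θ - 1) = 1 by field_simp; ring,
        Real.rpow_one]
    have hdecay : x ^ (θ - 1) ≤ ε := hRθ ▸ Real.rpow_le_rpow_of_nonpos hR0 hxR.le (by linarith)
    have hsplit : x ^ θ = x * x ^ (θ - 1) := by
      rw [← Real.rpow_one_add' hx0.le (by linarith), add_sub_cancel]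
    have := Real.rpow_pos_of_pos hε (-(θ / (1 - θ)))
    nlinarith [mul_le_mul_of_nonneg_left hdecay hx0.le]

theorem exists_mul_rpow_le_mul_add {θ : ℝ} (hθ0 : 0 < θ) (hθ1 : θ < 1) {A ε : ℝ} (hA : 0 ≤ A)
    (hε : 0 < ε) : ∃ B, ∀ x, 0 ≤ x → A * x ^ θ ≤ ε * x + B := by
  set δ := ε / (A + 1)
  have hδ : 0 < δ := by positivity
  have hAδ : A * δ ≤ ε := by
    rw [mul_div_assoc', div_le_iff₀ (by linarith)]
    nlinarith
  refine ⟨A * δ ^ (-(θ / (1 - θ))), fun x hx => ?_⟩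
  calc A * x ^ θ ≤ A * (δ * x + δ ^ (-(θ / (1 - θ)))) := by
        gcongr; exact rpow_le_mul_add_rpow hx hθ0 hθ1 hδ
    _ = A * δ * x + A * δ ^ (-(θ / (1 - θ))) := by ring
    _ ≤ ε * x + A * δ ^ (-(θ / (1 - θ))) := by gcongr

theorem statement7_general (s : ℝ) (hs : 1 < s) (f : ℝ × ℝ → ℝ) (hf : fAdmissible f)
    (e : ℕ → ℕ × ℕ × Bool) (a6 : ℝ) (ha6 : 0 < a6)
    (χ : ℝ → ℝ) (hχ : chiAdmissible χ) :
    ∃ α0 M0 : ℝ, 0 < α0 ∧ 0 < M0 ∧ ∀ β ∈ Set.Ioc (0 : ℝ) 1, ∀ m : ℕ, 1 ≤ m →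
      ∀ M : ℝ, M0 ≤ M → ∀ u ∈ Wnm e m m,
        M ≤ Jbeta s f a6 χ β u →
        intPow (s + 1) u ≤ 2 * (s + 1) * calI s f a6 β u →
        α0 * M ≤ Ibeta s f β u := by
  set C := intPow (s + 1).conjExponent f ^ (1 / (s + 1).conjExponent)
    * (4 * a6 * (s + 1)) ^ (1 / (s + 1))
  have hC : 0 ≤ C := by
    have := intPow_nonneg (s + 1).conjExponent f
    positivity
  obtain ⟨B, hB⟩ := exists_mul_rpow_le_mul_add (θ := 2 / (s + 1)) (by positivity)
    (by rw [div_lt_one (by linarith)]; linarith) hC (ε := 1 / 4) (by norm_num)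
  refine ⟨2 / 5, 4 * (|B| + 1), by norm_num, by positivity, ?_⟩
  intro β _ m _ M hM u hu hJ hsupp
  have hfu := (abs_intFU_le_of_intPow_le_calI (by linarith) hf.1.continuous
    (continuous_of_mem_Wnm hu) ha6.le hsupp).trans (hB _ (by positivity))
  have hJI := Jbeta_le_Ibeta_add_abs_intFU hχ s f a6 β u
  rcases abs_cases (Ibeta s f β u) with ⟨hI, -⟩ | ⟨hI, -⟩ <;>
    linarith [le_abs_self B, abs_nonneg B]

/-- on the support of `ψ`, `J_β(u) ≥ M ≥ M₀` forces `I_β(u) ≥ α₀·M`,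
uniformly in `β ∈ (0,1]` and `m`. -/
theorem statement7 (s : ℝ) (hs : 1 < s) (f : ℝ × ℝ → ℝ) (hf : fAdmissible f)
    (e : ℕ → ℕ × ℕ × Bool) (he : IsEnum e) (a6 : ℝ) (ha6 : 0 < a6)
    (χ : ℝ → ℝ) (hχ : chiAdmissible χ) :
    ∃ α0 M0 : ℝ, 0 < α0 ∧ 0 < M0 ∧ ∀ β ∈ Set.Ioc (0 : ℝ) 1, ∀ m : ℕ, 1 ≤ m →
      ∀ M : ℝ, M0 ≤ M → ∀ u ∈ Wnm e m m,
        M ≤ Jbeta s f a6 χ β u →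
        intPow (s + 1) u ≤ 2 * (s + 1) * calI s f a6 β u →
        α0 * M ≤ Ibeta s f β u :=
  statement7_general s hs f hf e a6 ha6 χ hχ
end
end

section
/- Let s>1 be a real number, β≥0, and let f:[0,π]×ℝ→ℝ be continuous and 2π-periodic in t. Suppose p∈C²(ℝ) is 2π-periodic, w∈C²([0,π]×ℝ) is 2π-periodic in t with w(0,t)=w(π,t)=0 for all t, and, setting v(x,t)=p(t+x)−p(t−x) and u=v+w, the equation w_tt(x,t)−w_xx(x,t) = −|u(x,t)|^{s−1}u(x,t)+β·v_tt(x,t)+f(x,t) holds for all (x,t)∈[0,π]×ℝ. Then for every r∈ℝ: 2π·β·p″(r) = ∫₀^π [ (|u|^{s−1}u − f)(x,r−x) − (|u|^{s−1}u − f)(x,r+x) ] dx. -/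
open MeasureTheory

noncomputable section

/-- Partial derivative in the first (space) variable. -/
def pdx (u : ℝ × ℝ → ℝ) (p : ℝ × ℝ) : ℝ := deriv (fun x => u (x, p.2)) p.1

/-- Partial derivative in the second (time) variable. -/
def pdt (u : ℝ × ℝ → ℝ) (p : ℝ × ℝ) : ℝ := deriv (fun t => u (p.1, t)) p.2

/-! Along the characteristics `t = r - x` and `t = r + x` the wave operator `□w = w_tt - w_xx` is,
up to sign, the `x`-derivative of `w_x + w_t` resp. `w_t - w_x` (symmetry of the Hessian). Hence
`∫₀^π (□w(x, r + x) - □w(x, r - x)) dx` reduces to boundary terms, which vanish by the Dirichlet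
conditions and the `2π`-periodicity of `w` in `t`. The terms `β p''(r ± 2x)` of the equation
integrate to increments of the `2π`-periodic `p'` over a full period, so only the constant
`2 β p''(r)` survives integration over `[0, π]`. -/

def waveOp (w : ℝ × ℝ → ℝ) (q : ℝ × ℝ) : ℝ := pdt (pdt w) q - pdx (pdx w) q

theorem hasDerivAt_fderiv_apply_comp {E F : Type*} [NormedAddCommGroup E] [NormedSpace ℝ E]
    [NormedAddCommGroup F] [NormedSpace ℝ F] {g : E → F} (hg : ContDiff ℝ 2 g) {γ : ℝ → E}
    {v : E} {y : ℝ} (hγ : HasDerivAt γ v y) (a : E) :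
    HasDerivAt (fun y => fderiv ℝ g (γ y) a) (fderiv ℝ (fderiv ℝ g) (γ y) v a) y := by
  have hD : Differentiable ℝ (fderiv ℝ g) :=
    (hg.fderiv_right (m := 1) le_rfl).differentiable one_ne_zero
  exact ((ContinuousLinearMap.apply ℝ F a).hasFDerivAt.comp (γ y)
    (hD (γ y)).hasFDerivAt).comp_hasDerivAt y hγ

theorem Function.Periodic.deriv {𝕜 F : Type*} [NontriviallyNormedField 𝕜] [NormedAddCommGroup F]
    [NormedSpace 𝕜 F] {f : 𝕜 → F} {c : 𝕜} (h : Function.Periodic f c) :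
    Function.Periodic (deriv f) c := fun x => by
  rw [← deriv_comp_add_const, h.funext]

section WaveOperator

variable {w : ℝ × ℝ → ℝ}

theorem pdx_eq_fderiv {q : ℝ × ℝ} (hw : DifferentiableAt ℝ w q) :
    pdx w q = fderiv ℝ w q (1, 0) :=
  (hw.hasFDerivAt.comp_hasDerivAt q.1
    ((hasDerivAt_id q.1).prodMk (hasDerivAt_const q.1 q.2))).deriv

theorem pdt_eq_fderiv {q : ℝ × ℝ} (hw : DifferentiableAt ℝ w q) :
    pdt w q = fderiv ℝ w q (0, 1) :=
  (hw.hasFDerivAt.comp_hasDerivAt q.2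
    ((hasDerivAt_const q.2 q.1).prodMk (hasDerivAt_id q.2))).deriv

theorem pdx_pdx_eq_fderiv_fderiv (hw : ContDiff ℝ 2 w) (q : ℝ × ℝ) :
    pdx (pdx w) q = fderiv ℝ (fderiv ℝ w) q (1, 0) (1, 0) := by
  have hpdx : (fun x => pdx w (x, q.2)) = fun x => fderiv ℝ w (x, q.2) (1, 0) :=
    funext fun _ => pdx_eq_fderiv (hw.differentiable two_ne_zero _)
  rw [pdx, hpdx]
  exact (hasDerivAt_fderiv_apply_comp hw
    ((hasDerivAt_id q.1).prodMk (hasDerivAt_const q.1 q.2)) _).deriv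

theorem pdt_pdt_eq_fderiv_fderiv (hw : ContDiff ℝ 2 w) (q : ℝ × ℝ) :
    pdt (pdt w) q = fderiv ℝ (fderiv ℝ w) q (0, 1) (0, 1) := by
  have hpdt : (fun t => pdt w (q.1, t)) = fun t => fderiv ℝ w (q.1, t) (0, 1) :=
    funext fun _ => pdt_eq_fderiv (hw.differentiable two_ne_zero _)
  rw [pdt, hpdt]
  exact (hasDerivAt_fderiv_apply_comp hw
    ((hasDerivAt_const q.2 q.1).prodMk (hasDerivAt_id q.2)) _).deriv

theorem continuous_waveOp (hw : ContDiff ℝ 2 w) : Continuous (waveOp w) := by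
  have hD2 : Continuous (fderiv ℝ (fderiv ℝ w)) :=
    (hw.fderiv_right (m := 1) le_rfl).continuous_fderiv one_ne_zero
  have hwaveOp : waveOp w = fun q => fderiv ℝ (fderiv ℝ w) q (0, 1) (0, 1) -
      fderiv ℝ (fderiv ℝ w) q (1, 0) (1, 0) := by
    funext q
    rw [waveOp, pdt_pdt_eq_fderiv_fderiv hw, pdx_pdx_eq_fderiv_fderiv hw]
  rw [hwaveOp]
  fun_prop

/-- `w_x + w_t` on the characteristic `t = r - x` plus `w_t - w_x` on the characteristic
`t = r + x`. -/
def waveFlux (w : ℝ × ℝ → ℝ) (r x : ℝ) : ℝ :=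
  fderiv ℝ w (x, r - x) (1, 1) + fderiv ℝ w (x, r + x) (-1, 1)

theorem hasDerivAt_waveFlux (hw : ContDiff ℝ 2 w) (r x : ℝ) :
    HasDerivAt (waveFlux w r) (waveOp w (x, r + x) - waveOp w (x, r - x)) x := by
  have hsymm (q : ℝ × ℝ) : IsSymmSndFDerivAt ℝ w q :=
    hw.contDiffAt.isSymmSndFDerivAt (by simp)
  have hminus : HasDerivAt (fun y : ℝ => (y, r - y)) ((1 : ℝ), (-1 : ℝ)) x := by
    simpa using (hasDerivAt_id x).prodMk ((hasDerivAt_id x).const_sub r)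
  have hplus : HasDerivAt (fun y : ℝ => (y, r + y)) ((1 : ℝ), (1 : ℝ)) x := by
    simpa using (hasDerivAt_id x).prodMk ((hasDerivAt_id x).const_add r)
  refine ((hasDerivAt_fderiv_apply_comp hw hminus (1, 1)).add
    (hasDerivAt_fderiv_apply_comp hw hplus (-1, 1))).congr_deriv ?_
  -- for symmetric `B`, `B (e₁ ∓ e₂) (e₁ ± e₂) = ±(B e₁ e₁ - B e₂ e₂)`
  have he₁ : ((1 : ℝ), (1 : ℝ)) = (1, 0) + (0, 1) := by simp
  have he₂ : ((1 : ℝ), (-1 : ℝ)) = (1, 0) - (0, 1) := by simp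
  have he₃ : ((-1 : ℝ), (1 : ℝ)) = (0, 1) - (1, 0) := by simp
  simp only [waveOp, pdt_pdt_eq_fderiv_fderiv hw, pdx_pdx_eq_fderiv_fderiv hw, he₁, he₂, he₃,
    map_add, map_sub, add_apply, sub_apply,
    hsymm (x, r - x) (0, 1) (1, 0), hsymm (x, r + x) (0, 1) (1, 0)]
  ring

theorem fderiv_apply_zero_one_eq_zero (hw : Differentiable ℝ w) {x : ℝ}
    (hx : ∀ t, w (x, t) = 0) (t : ℝ) : fderiv ℝ w (x, t) (0, 1) = 0 := by
  rw [← pdt_eq_fderiv (hw _)]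
  simp [pdt, hx]

theorem waveFlux_left_eq_zero (hw : Differentiable ℝ w) (h0 : ∀ t, w (0, t) = 0) (r : ℝ) :
    waveFlux w r 0 = 0 := by
  have hsum : ((1 : ℝ), (1 : ℝ)) + (-1, 1) = (2 : ℝ) • (0, 1) := by norm_num
  rw [waveFlux, sub_zero, add_zero, ← map_add, hsum, map_smul,
    fderiv_apply_zero_one_eq_zero hw h0, smul_zero]

theorem waveFlux_right_eq_zero (hw : Differentiable ℝ w) {L : ℝ} (hL : ∀ t, w (L, t) = 0)
    (hper : ∀ x t, w (x, t + 2 * L) = w (x, t)) (r : ℝ) : waveFlux w r L = 0 := by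
  have hx : fderiv ℝ w (L, r + L) (1, 0) = fderiv ℝ w (L, r - L) (1, 0) := by
    rw [← pdx_eq_fderiv (hw _), ← pdx_eq_fderiv (hw _), show r + L = r - L + 2 * L by ring]
    simp only [pdx, hper]
  have he₁ : ((1 : ℝ), (1 : ℝ)) = (1, 0) + (0, 1) := by simp
  have he₂ : ((-1 : ℝ), (1 : ℝ)) = (0, 1) - (1, 0) := by simp
  rw [waveFlux, he₁, he₂, map_add, map_sub, fderiv_apply_zero_one_eq_zero hw hL,
    fderiv_apply_zero_one_eq_zero hw hL, hx]
  ring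

theorem integral_waveOp_characteristics_eq_zero (hw : ContDiff ℝ 2 w) {L : ℝ}
    (h0 : ∀ t, w (0, t) = 0) (hL : ∀ t, w (L, t) = 0)
    (hper : ∀ x t, w (x, t + 2 * L) = w (x, t)) (r : ℝ) :
    ∫ x in (0 : ℝ)..L, (waveOp w (x, r + x) - waveOp w (x, r - x)) = 0 := by
  have hd := hw.differentiable two_ne_zero
  have hcont := continuous_waveOp hw
  rw [intervalIntegral.integral_eq_sub_of_hasDerivAt (fun x _ => hasDerivAt_waveFlux hw r x)
      (Continuous.intervalIntegrable (by fun_prop) _ _),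
    waveFlux_right_eq_zero hd hL hper, waveFlux_left_eq_zero hd h0, sub_zero]

end WaveOperator

theorem integral_deriv_deriv_add_add_sub_eq_zero_of_periodic {p : ℝ → ℝ} {L : ℝ}
    (hp : ContDiff ℝ 2 p) (hper : Function.Periodic p (2 * L)) (r : ℝ) :
    ∫ x in (0 : ℝ)..L, (deriv (deriv p) (r + 2 * x) + deriv (deriv p) (r - 2 * x)) = 0 := by
  have hp' : Differentiable ℝ (deriv p) := hp.differentiable_deriv_two
  have hp'' : Continuous (deriv (deriv p)) := (hp.deriv' (n := 1)).continuous_deriv_one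
  have hderiv (x : ℝ) : HasDerivAt (fun y => (deriv p (r + 2 * y) - deriv p (r - 2 * y)) / 2)
      (deriv (deriv p) (r + 2 * x) + deriv (deriv p) (r - 2 * x)) x := by
    have hplus := (hp' _).hasDerivAt.comp x (((hasDerivAt_id x).const_mul 2).const_add r)
    have hminus := (hp' _).hasDerivAt.comp x (((hasDerivAt_id x).const_mul 2).const_sub r)
    refine ((hplus.sub hminus).div_const 2).congr_deriv ?_
    simp only [id]
    ring
  rw [intervalIntegral.integral_eq_sub_of_hasDerivAt (fun x _ => hderiv x)
      (Continuous.intervalIntegrable (by fun_prop) _ _),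
    hper.deriv r, ← hper.deriv (r - 2 * L), sub_add_cancel]
  simp

theorem statement19_general (s : ℝ) (β : ℝ)
    (f : ℝ × ℝ → ℝ)
    (p : ℝ → ℝ) (hp : ContDiff ℝ 2 p) (hpper : Function.Periodic p (2 * Real.pi))
    (w : ℝ × ℝ → ℝ) (hw : ContDiff ℝ 2 w)
    (hwper : ∀ x t : ℝ, w (x, t + 2 * Real.pi) = w (x, t))
    (hwbc : ∀ t : ℝ, w (0, t) = 0 ∧ w (Real.pi, t) = 0)
    (u : ℝ × ℝ → ℝ)
    (heq : ∀ x ∈ Set.Icc (0 : ℝ) Real.pi, ∀ t : ℝ,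
      pdt (pdt w) (x, t) - pdx (pdx w) (x, t) =
        -(|u (x, t)| ^ (s - 1) * u (x, t))
          + β * (deriv (deriv p) (t + x) - deriv (deriv p) (t - x)) + f (x, t)) :
    ∀ r : ℝ, 2 * Real.pi * β * deriv (deriv p) r =
      ∫ x in (0 : ℝ)..Real.pi,
        ((|u (x, r - x)| ^ (s - 1) * u (x, r - x) - f (x, r - x))
          - (|u (x, r + x)| ^ (s - 1) * u (x, r + x) - f (x, r + x))) := by
  intro r
  have hpoint : ∀ x ∈ Set.uIcc 0 Real.pi,
      (|u (x, r - x)| ^ (s - 1) * u (x, r - x) - f (x, r - x))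
          - (|u (x, r + x)| ^ (s - 1) * u (x, r + x) - f (x, r + x)) =
        2 * β * deriv (deriv p) r + (waveOp w (x, r + x) - waveOp w (x, r - x)) -
          β * (deriv (deriv p) (r + 2 * x) + deriv (deriv p) (r - 2 * x)) := by
    intro x hx
    rw [Set.uIcc_of_le Real.pi_pos.le] at hx
    have hminus := heq x hx (r - x)
    have hplus := heq x hx (r + x)
    rw [show r - x + x = r by ring, show r - x - x = r - 2 * x by ring] at hminus
    rw [show r + x + x = r + 2 * x by ring, show r + x - x = r by ring] at hplus
    rw [waveOp, waveOp]
    linarith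
  have hwave := continuous_waveOp hw
  have hp'' : Continuous (deriv (deriv p)) := (hp.deriv' (n := 1)).continuous_deriv_one
  have hint (g : ℝ → ℝ) (hg : Continuous g) : IntervalIntegrable g volume 0 Real.pi :=
    hg.intervalIntegrable _ _
  rw [intervalIntegral.integral_congr hpoint,
    intervalIntegral.integral_sub (hint _ (by fun_prop)) (hint _ (by fun_prop)),
    intervalIntegral.integral_add (hint _ (by fun_prop)) (hint _ (by fun_prop)),
    integral_waveOp_characteristics_eq_zero hw (fun t => (hwbc t).1) (fun t => (hwbc t).2) hwper,
    intervalIntegral.integral_const_mul β,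
    integral_deriv_deriv_add_add_sub_eq_zero_of_periodic hp hpper, intervalIntegral.integral_const]
  simp only [sub_zero, smul_eq_mul, add_zero, mul_zero]
  ring

/-- testing the modified equation against kernel elements yields the
identity `2πβ p''(r) = ∫₀^π [(|u|^{s-1}u - f)(x, r-x) - (|u|^{s-1}u - f)(x, r+x)] dx`
for all `r`. -/
theorem statement19 (s : ℝ) (hs : 1 < s) (β : ℝ) (hβ : 0 ≤ β)
    (f : ℝ × ℝ → ℝ) (hf : Continuous f)
    (hfper : ∀ x t : ℝ, f (x, t + 2 * Real.pi) = f (x, t))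
    (p : ℝ → ℝ) (hp : ContDiff ℝ 2 p) (hpper : Function.Periodic p (2 * Real.pi))
    (w : ℝ × ℝ → ℝ) (hw : ContDiff ℝ 2 w)
    (hwper : ∀ x t : ℝ, w (x, t + 2 * Real.pi) = w (x, t))
    (hwbc : ∀ t : ℝ, w (0, t) = 0 ∧ w (Real.pi, t) = 0)
    (u : ℝ × ℝ → ℝ)
    (hu : ∀ q : ℝ × ℝ, u q = p (q.2 + q.1) - p (q.2 - q.1) + w q)
    (heq : ∀ x ∈ Set.Icc (0 : ℝ) Real.pi, ∀ t : ℝ,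
      pdt (pdt w) (x, t) - pdx (pdx w) (x, t) =
        -(|u (x, t)| ^ (s - 1) * u (x, t))
          + β * (deriv (deriv p) (t + x) - deriv (deriv p) (t - x)) + f (x, t)) :
    ∀ r : ℝ, 2 * Real.pi * β * deriv (deriv p) r =
      ∫ x in (0 : ℝ)..Real.pi,
        ((|u (x, r - x)| ^ (s - 1) * u (x, r - x) - f (x, r - x))
          - (|u (x, r + x)| ^ (s - 1) * u (x, r + x) - f (x, r + x))) :=
  statement19_general s β f p hp hpper w hw hwper hwbc u heq
end
end
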